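/- Let (X_i^S)_{i≥1} be i.i.d. with law μ_S on ℝ^d and (X_i^T)_{i≥1} be i.i.d. with law μ_T on ℝ^d, both with compact support and independent of each other, and let (N_n) be sample sizes with n/N_n bounded. Let γ̄ ∈ ℝ^d satisfy E_S[X exp(Xᵀγ̄)] = E_T[X] with J := E_S[XXᵀ exp(Xᵀγ̄)] invertible. Suppose γ̂_n are random vectors satisfying the empirical covariate-balancing equation n⁻¹ Σ_{i≤n} X_i^S exp((X_i^S)ᵀγ̂_n) = N_n⁻¹ Σ_{i≤N_n} X_i^T almost surely, and γ̂_n → γ̄ in probability. Then √n(γ̂_n − γ̄) is bounded in probability, i.e., γ̂_n − γ̄ = O_p(n^{−1/2}). -/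

import Mathlib

open MeasureTheory ProbabilityTheory Filter Matrix
open scoped Matrix

/-- `Z n = O_p(1)`: for every `ε > 0` there is `M > 0` such that
`P(‖Z n‖ > M) < ε` for all sufficiently large `n`. -/
def BoundedInProb {Ω E : Type*} [MeasurableSpace Ω] [Norm E]
    (P : Measure Ω) (Z : ℕ → Ω → E) : Prop :=
  ∀ ε : ℝ, 0 < ε → ∃ M : ℝ, 0 < M ∧
    ∀ᶠ n in atTop, (P {ω | M < ‖Z n ω‖}).toReal < ε

/-!
On the event where `γ̂_n` lies within distance `1` of `γ̄` and the empirical Jacobian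
`J_n = n⁻¹ ∑ X_i X_iᵀ exp (X_iᵀγ̄)` is entrywise close to `J` (an event of probability tending to
one, by consistency and Chebyshev's weak law), `J_n` is uniformly positive definite, and the
elementary inequality `(eᵇ - 1) b ≥ e^{-|b|} b²` makes the empirical balancing moment map
`m_n(γ) = n⁻¹ ∑ X_i exp (X_iᵀγ)` strongly monotone on the segment `[γ̄, γ̂_n]`. Hence
`‖γ̂_n - γ̄‖ ≲ ‖m_n(γ̂_n) - m_n(γ̄)‖ = ‖N⁻¹ ∑ X_j^T - m_n(γ̄)‖`, and both terms of the last
difference are `O_p(n^{-1/2})`-close to the common mean `E_T X = E_S[X exp (Xᵀγ̄)]` by Chebyshev's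
inequality, using `n ≤ C N_n`.
-/

open Topology

namespace BoundedInProb

variable {Ω : Type*} [MeasurableSpace Ω] {P : Measure Ω} [IsFiniteMeasure P]

theorem of_norm_le_mul {E F : Type*} [Norm E] [Norm F] {Z : ℕ → Ω → E} {U : ℕ → Ω → F}
    (hU : BoundedInProb P U) {c : ℝ} (hc : 0 ≤ c) {A : ℕ → Set Ω}
    (hA : Tendsto (fun n => P.real (A n)) atTop (𝓝 0))
    (hZ : ∀ᶠ n in atTop, ∀ᵐ ω ∂P, ω ∉ A n → ‖Z n ω‖ ≤ c * ‖U n ω‖) :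
    BoundedInProb P Z := by
  intro ε hε
  obtain ⟨M, hM, hUM⟩ := hU (ε / 2) (half_pos hε)
  refine ⟨c * M + 1, by positivity, ?_⟩
  filter_upwards [hUM, hA.eventually_lt_const (half_pos hε), hZ] with n hUn hAn hZn
  have hsub : ({ω | c * M + 1 < ‖Z n ω‖} : Set Ω) ≤ᵐ[P]
      (A n ∪ {ω | M < ‖U n ω‖} : Set Ω) := by
    filter_upwards [hZn] with ω hω (hlt : c * M + 1 < ‖Z n ω‖)
    refine or_iff_not_imp_left.2 fun hωA => show M < ‖U n ω‖ from lt_of_not_ge fun hUω => ?_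
    linarith [hω hωA, mul_le_mul_of_nonneg_left hUω hc]
  calc (P {ω | c * M + 1 < ‖Z n ω‖}).toReal
      ≤ P.real (A n ∪ {ω | M < ‖U n ω‖}) := ENNReal.toReal_mono (measure_ne_top _ _)
        (measure_mono_ae hsub)
    _ ≤ P.real (A n) + P.real {ω | M < ‖U n ω‖} := measureReal_union_le _ _
    _ < ε := by simp only [measureReal_def] at hAn ⊢; linarith

theorem sub {E : Type*} [SeminormedAddGroup E] {V W : ℕ → Ω → E}
    (hV : BoundedInProb P V) (hW : BoundedInProb P W) :
    BoundedInProb P (fun n ω => V n ω - W n ω) := by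
  intro ε hε
  obtain ⟨M₁, hM₁, hV⟩ := hV (ε / 2) (half_pos hε)
  obtain ⟨M₂, hM₂, hW⟩ := hW (ε / 2) (half_pos hε)
  refine ⟨M₁ + M₂, by positivity, ?_⟩
  filter_upwards [hV, hW] with n hVn hWn
  have hsub : {ω | M₁ + M₂ < ‖V n ω - W n ω‖} ⊆ {ω | M₁ < ‖V n ω‖} ∪ {ω | M₂ < ‖W n ω‖} := by
    intro ω hω
    by_contra hcon
    simp only [Set.mem_union, Set.mem_ofPred_eq, not_or, not_lt] at hω hcon
    linarith [norm_sub_le (V n ω) (W n ω)]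
  calc P.real {ω | M₁ + M₂ < ‖V n ω - W n ω‖}
      ≤ P.real ({ω | M₁ < ‖V n ω‖} ∪ {ω | M₂ < ‖W n ω‖}) := measureReal_mono hsub
    _ ≤ P.real {ω | M₁ < ‖V n ω‖} + P.real {ω | M₂ < ‖W n ω‖} := measureReal_union_le _ _
    _ < ε := by rw [measureReal_def, measureReal_def]; linarith

theorem pi {ι : Type*} [Fintype ι] {F : ι → Type*} [∀ k, SeminormedAddGroup (F k)]
    {Z : ℕ → Ω → ∀ k, F k} (h : ∀ k, BoundedInProb P (fun n ω => Z n ω k)) :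
    BoundedInProb P Z := by
  intro ε hε
  have hε' : 0 < ε / (Fintype.card ι + 1) := by positivity
  choose M hM hev using fun k => h k _ hε'
  have hM_le : ∀ k, M k ≤ ∑ j, M j + 1 := fun k => by
    linarith [Finset.single_le_sum (fun j _ => (hM j).le) (Finset.mem_univ k)]
  have hMpos : 0 < ∑ k, M k + 1 :=
    add_pos_of_nonneg_of_pos (Finset.sum_nonneg fun k _ => (hM k).le) one_pos
  refine ⟨∑ k, M k + 1, hMpos, ?_⟩
  filter_upwards [eventually_all.2 hev] with n hn
  have hsub : {ω | ∑ k, M k + 1 < ‖Z n ω‖} ⊆ ⋃ k, {ω | M k < ‖Z n ω k‖} := by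
    intro ω hω
    by_contra hcon
    simp only [Set.mem_iUnion, Set.mem_ofPred_eq, not_exists, not_lt] at hω hcon
    exact hω.not_ge <| (pi_norm_le_iff_of_nonneg hMpos.le).2
      fun k => (hcon k).trans (hM_le k)
  calc P.real {ω | ∑ k, M k + 1 < ‖Z n ω‖}
      ≤ ∑ k, P.real {ω | M k < ‖Z n ω k‖} :=
        (measureReal_mono hsub).trans (measureReal_iUnion_fintype_le _)
    _ ≤ ∑ _k : ι, ε / (Fintype.card ι + 1) := Finset.sum_le_sum fun k _ => (hn k).le
    _ < ε := by
      rw [Finset.sum_const, Finset.card_univ, nsmul_eq_mul, mul_div_assoc',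
        div_lt_iff₀ (by positivity)]
      linarith

end BoundedInProb

section CompactSupport

variable {E : Type*} [TopologicalSpace E] [MeasurableSpace E] {μ : Measure E} {K : Set E}

theorem exists_ae_abs_le_of_isCompact (hK : IsCompact K) (hμK : μ Kᶜ = 0) {φ : E → ℝ}
    (hφ : Continuous φ) : ∃ B, ∀ᵐ x ∂μ, |φ x| ≤ B := by
  obtain ⟨B, hB⟩ := hK.exists_bound_of_continuousOn hφ.continuousOn
  exact ⟨B, by filter_upwards [ae_iff.2 hμK] with x hx using hB x hx⟩

theorem Continuous.integrable_of_null_compl_isCompact [OpensMeasurableSpace E] [IsFiniteMeasure μ]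
    (hK : IsCompact K) (hμK : μ Kᶜ = 0) {φ : E → ℝ} (hφ : Continuous φ) : Integrable φ μ := by
  obtain ⟨B, hB⟩ := exists_ae_abs_le_of_isCompact hK hμK hφ
  exact Integrable.of_bound hφ.aestronglyMeasurable B hB

end CompactSupport

section SampleMean

variable {Ω : Type*} [MeasurableSpace Ω] {P : Measure Ω} [IsProbabilityMeasure P]

theorem measureReal_le_abs_sampleMean_sub_le {Y : ℕ → Ω → ℝ} {B m : ℝ}
    (hYm : ∀ i, Measurable (Y i)) (hYB : ∀ i, ∀ᵐ ω ∂P, |Y i ω| ≤ B)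
    (hYmean : ∀ i, P[Y i] = m) (hind : Pairwise fun i j => IndepFun (Y i) (Y j) P)
    {N : ℕ} (hN : 0 < N) {a : ℝ} (ha : 0 < a) :
    P.real {ω | a ≤ |(N : ℝ)⁻¹ * ∑ i ∈ Finset.range N, Y i ω - m|} ≤ B ^ 2 / (N * a ^ 2) := by
  have hY2 : ∀ i, MemLp (Y i) 2 P := fun i =>
    memLp_of_bounded (by filter_upwards [hYB i] with ω h using abs_le.1 h)
      (hYm i).aestronglyMeasurable 2
  have hNR : (0 : ℝ) < N := by exact_mod_cast hN
  set S := ∑ i ∈ Finset.range N, Y i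
  have havg : (fun ω => (N : ℝ)⁻¹ * ∑ i ∈ Finset.range N, Y i ω) = (N : ℝ)⁻¹ • S := by
    ext ω; simp [S, Finset.sum_apply]
  have hS2 : MemLp ((N : ℝ)⁻¹ • S) 2 P := (memLp_finsetSum' _ fun i _ => hY2 i).const_smul _
  have hmean : P[(N : ℝ)⁻¹ • S] = m := by
    rw [← havg, integral_const_mul, integral_finsetSum _ fun i _ => (hY2 i).integrable one_le_two]
    simp [hYmean, hNR.ne']
  have hvar : variance ((N : ℝ)⁻¹ • S) P ≤ B ^ 2 / N := by
    rw [variance_smul, IndepFun.variance_sum (fun i _ => hY2 i) fun i _ j _ hij => hind hij]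
    calc ((N : ℝ)⁻¹) ^ 2 * ∑ i ∈ Finset.range N, variance (Y i) P
        ≤ ((N : ℝ)⁻¹) ^ 2 * ∑ _i ∈ Finset.range N, B ^ 2 := by
          gcongr with i
          exact (variance_le_sq_of_bounded (by filter_upwards [hYB i] with ω h using abs_le.1 h)
            (hYm i).aemeasurable).trans_eq (by ring)
      _ = B ^ 2 / N := by
          rw [Finset.sum_const, Finset.card_range, nsmul_eq_mul]
          field_simp
  have hcheb := meas_ge_le_variance_div_sq hS2 ha
  rw [hmean, ← havg] at hcheb
  refine ENNReal.toReal_le_of_le_ofReal (by positivity) (hcheb.trans (ENNReal.ofReal_le_ofReal ?_))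
  rw [← havg] at hvar
  calc variance _ P / a ^ 2 ≤ B ^ 2 / N / a ^ 2 := by gcongr
    _ = B ^ 2 / (N * a ^ 2) := by rw [div_div]

variable {E : Type*} [TopologicalSpace E] [MeasurableSpace E] [OpensMeasurableSpace E]
  {μ : Measure E} {X : ℕ → Ω → E} {K : Set E}

theorem exists_measureReal_le_abs_sampleMean_sub_le (hX : ∀ i, Measurable (X i))
    (hlaw : ∀ i, P.map (X i) = μ) (hind : Pairwise fun i j => IndepFun (X i) (X j) P)
    (hK : IsCompact K) (hμK : μ Kᶜ = 0) {φ : E → ℝ} (hφ : Continuous φ) :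
    ∃ B, 0 ≤ B ∧ ∀ N : ℕ, 0 < N → ∀ a : ℝ, 0 < a →
      P.real {ω | a ≤ |(N : ℝ)⁻¹ * ∑ i ∈ Finset.range N, φ (X i ω) - ∫ x, φ x ∂μ|}
        ≤ B / (N * a ^ 2) := by
  obtain ⟨B, hB⟩ := exists_ae_abs_le_of_isCompact hK hμK hφ
  refine ⟨B ^ 2, sq_nonneg B, fun N hN a ha => measureReal_le_abs_sampleMean_sub_le
    (fun i => hφ.measurable.comp (hX i)) (fun i => ?_) (fun i => ?_)
    (fun i j hij => (hind hij).comp hφ.measurable hφ.measurable) hN ha⟩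
  · refine ae_of_ae_map (p := fun x => |φ x| ≤ B) (hX i).aemeasurable ?_
    rwa [hlaw i]
  · rw [← hlaw i, integral_map (hX i).aemeasurable hφ.aestronglyMeasurable]
    rfl

theorem tendstoInMeasure_sampleMean (hX : ∀ i, Measurable (X i))
    (hlaw : ∀ i, P.map (X i) = μ) (hind : Pairwise fun i j => IndepFun (X i) (X j) P)
    (hK : IsCompact K) (hμK : μ Kᶜ = 0) {φ : E → ℝ} (hφ : Continuous φ) :
    TendstoInMeasure P (fun (n : ℕ) ω => (n : ℝ)⁻¹ * ∑ i ∈ Finset.range n, φ (X i ω)) atTop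
      (fun _ => ∫ x, φ x ∂μ) := by
  obtain ⟨B, -, hB⟩ := exists_measureReal_le_abs_sampleMean_sub_le hX hlaw hind hK hμK hφ
  refine tendstoInMeasure_iff_measureReal_norm.2 fun a ha => ?_
  have hbound : Tendsto (fun n : ℕ => B / (n * a ^ 2)) atTop (𝓝 0) :=
    tendsto_const_nhds.div_atTop (tendsto_natCast_atTop_atTop.atTop_mul_const (by positivity))
  refine tendsto_of_tendsto_of_tendsto_of_le_of_le' tendsto_const_nhds hbound
    (Eventually.of_forall fun n => measureReal_nonneg) ?_
  filter_upwards [eventually_gt_atTop 0] with n hn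
  simpa only [Real.norm_eq_abs] using hB n hn a ha

theorem boundedInProb_sqrt_mul_sampleMean_sub (hX : ∀ i, Measurable (X i))
    (hlaw : ∀ i, P.map (X i) = μ) (hind : Pairwise fun i j => IndepFun (X i) (X j) P)
    (hK : IsCompact K) (hμK : μ Kᶜ = 0) {φ : E → ℝ} (hφ : Continuous φ)
    {N : ℕ → ℕ} {C : ℝ} (hN : ∀ n : ℕ, (n : ℝ) ≤ C * N n) :
    BoundedInProb P (fun (n : ℕ) ω =>
      √n * ((N n : ℝ)⁻¹ * ∑ i ∈ Finset.range (N n), φ (X i ω) - ∫ x, φ x ∂μ)) := by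
  obtain ⟨B, hB0, hB⟩ := exists_measureReal_le_abs_sampleMean_sub_le hX hlaw hind hK hμK hφ
  intro ε hε
  obtain ⟨M, hMε, hM⟩ := (((tendsto_const_nhds (x := C * B)).div_atTop
    (tendsto_pow_atTop two_ne_zero)).eventually (gt_mem_nhds hε)).and
    (eventually_gt_atTop 0) |>.exists
  refine ⟨M, hM, Eventually.of_forall fun n => ?_⟩
  rcases n.eq_zero_or_pos with rfl | hn
  · simpa [hM.not_gt] using hε
  have hnR : (0 : ℝ) < n := by exact_mod_cast hn
  have hN0 : 0 < N n := Nat.pos_of_ne_zero fun h => hnR.not_ge (by simpa [h] using hN n)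
  have hsq : 0 < √(n : ℝ) := Real.sqrt_pos.2 hnR
  set D : Ω → ℝ := fun ω => (N n : ℝ)⁻¹ * ∑ i ∈ Finset.range (N n), φ (X i ω) - ∫ x, φ x ∂μ
  have hsub : {ω | M < ‖√n * D ω‖} ⊆ {ω | M / √n ≤ |D ω|} := fun ω hω => by
    simp only [Set.mem_ofPred_eq, Real.norm_eq_abs, abs_mul, abs_of_pos hsq] at hω ⊢
    rw [div_le_iff₀' hsq]
    exact hω.le
  calc P.real {ω | M < ‖√n * D ω‖} ≤ P.real {ω | M / √n ≤ |D ω|} := measureReal_mono hsub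
    _ ≤ B / (N n * (M / √n) ^ 2) := hB _ hN0 _ (by positivity)
    _ = B * n / (N n * M ^ 2) := by
      rw [div_pow, Real.sq_sqrt hnR.le]
      field_simp
    _ ≤ B * (C * N n) / (N n * M ^ 2) := by gcongr; exact hN n
    _ = C * B / M ^ 2 := by field_simp
    _ < ε := hMε

theorem boundedInProb_sqrt_smul_sampleMean_sub {ι : Type*} [Fintype ι]
    (hX : ∀ i, Measurable (X i))
    (hlaw : ∀ i, P.map (X i) = μ) (hind : Pairwise fun i j => IndepFun (X i) (X j) P)
    (hK : IsCompact K) (hμK : μ Kᶜ = 0) {φ : E → ι → ℝ} (hφ : Continuous φ)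
    {N : ℕ → ℕ} {C : ℝ} (hN : ∀ n : ℕ, (n : ℝ) ≤ C * N n) :
    BoundedInProb P (fun (n : ℕ) ω =>
      √n • ((N n : ℝ)⁻¹ • ∑ i ∈ Finset.range (N n), φ (X i ω) - ∫ x, φ x ∂μ)) := by
  have : IsProbabilityMeasure μ := hlaw 0 ▸ Measure.isProbabilityMeasure_map (hX 0).aemeasurable
  have hφk : ∀ k, Continuous fun x => φ x k := fun k => (continuous_apply k).comp hφ
  have hint : ∀ k, Integrable (fun x => φ x k) μ := fun k =>
    (hφk k).integrable_of_null_compl_isCompact hK hμK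
  refine BoundedInProb.pi fun k => ?_
  simpa [eval_integral hint, Finset.sum_apply] using
    boundedInProb_sqrt_mul_sampleMean_sub hX hlaw hind hK hμK (hφk k) hN

end SampleMean

section QuadraticForm

variable {ι : Type*} [Fintype ι]

theorem dotProduct_mulVec_eq_sum (A : Matrix ι ι ℝ) (v : ι → ℝ) :
    v ⬝ᵥ (A *ᵥ v) = ∑ k, ∑ l, v k * A k l * v l := by
  simp [dotProduct, mulVec, Finset.mul_sum, mul_assoc]

theorem mul_sq_dotProduct_eq_sum (w : ℝ) (x v : ι → ℝ) :
    w * (x ⬝ᵥ v) ^ 2 = ∑ k, ∑ l, v k * (x k * x l * w) * v l := by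
  rw [sq, dotProduct, Finset.sum_mul_sum, Finset.mul_sum]
  refine Finset.sum_congr rfl fun k _ => ?_
  rw [Finset.mul_sum]
  exact Finset.sum_congr rfl fun l _ => by ring

theorem abs_dotProduct_le (u v : ι → ℝ) : |u ⬝ᵥ v| ≤ Fintype.card ι * ‖u‖ * ‖v‖ := by
  calc |u ⬝ᵥ v| ≤ ∑ k, |u k * v k| := Finset.abs_sum_le_sum_abs _ _
    _ ≤ ∑ _k : ι, ‖u‖ * ‖v‖ := Finset.sum_le_sum fun k _ => by
      rw [abs_mul]
      exact mul_le_mul (norm_le_pi_norm u k) (norm_le_pi_norm v k) (abs_nonneg _) (norm_nonneg _)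
    _ = Fintype.card ι * ‖u‖ * ‖v‖ := by simp [mul_assoc]

theorem abs_dotProduct_mulVec_le {A : Matrix ι ι ℝ} {δ : ℝ} (hA : ∀ k l, |A k l| ≤ δ)
    (v : ι → ℝ) : |v ⬝ᵥ (A *ᵥ v)| ≤ Fintype.card ι ^ 2 * δ * ‖v‖ ^ 2 := by
  rw [dotProduct_mulVec_eq_sum]
  calc |∑ k, ∑ l, v k * A k l * v l| ≤ ∑ k, ∑ l, |v k * A k l * v l| :=
        (Finset.abs_sum_le_sum_abs _ _).trans
          (Finset.sum_le_sum fun k _ => Finset.abs_sum_le_sum_abs _ _)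
    _ ≤ ∑ _k : ι, ∑ _l : ι, ‖v‖ * δ * ‖v‖ := by
      refine Finset.sum_le_sum fun k _ => Finset.sum_le_sum fun l _ => ?_
      have hδ : 0 ≤ δ := (abs_nonneg _).trans (hA k l)
      rw [abs_mul, abs_mul]
      exact mul_le_mul (mul_le_mul (norm_le_pi_norm v k) (hA k l) (abs_nonneg _) (norm_nonneg _))
        (norm_le_pi_norm v l) (abs_nonneg _) (by positivity)
    _ = Fintype.card ι ^ 2 * δ * ‖v‖ ^ 2 := by
      simp only [Finset.sum_const, Finset.card_univ, nsmul_eq_mul]; ring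

theorem Matrix.PosDef.exists_pos_mul_sq_norm_le {A : Matrix ι ι ℝ} (hA : A.PosDef) :
    ∃ c, 0 < c ∧ ∀ v, c * ‖v‖ ^ 2 ≤ v ⬝ᵥ (A *ᵥ v) := by
  rcases isEmpty_or_nonempty ι with hι | hι
  · exact ⟨1, one_pos, fun v => by simp [Subsingleton.elim v 0]⟩
  have hQ : Continuous fun v : ι → ℝ => v ⬝ᵥ (A *ᵥ v) := by fun_prop
  obtain ⟨v₀, hv₀, hmin⟩ := (isCompact_sphere (0 : ι → ℝ) 1).exists_isMinOn
    (NormedSpace.sphere_nonempty.2 zero_le_one) hQ.continuousOn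
  have hv₀0 : v₀ ≠ 0 := ne_zero_of_mem_unit_sphere ⟨v₀, hv₀⟩
  refine ⟨v₀ ⬝ᵥ (A *ᵥ v₀), by simpa using hA.dotProduct_mulVec_pos hv₀0, fun v => ?_⟩
  rcases eq_or_ne v 0 with rfl | hv
  · simp
  have hvpos : 0 < ‖v‖ := norm_pos_iff.2 hv
  have hu : ‖v‖⁻¹ • v ∈ Metric.sphere (0 : ι → ℝ) 1 := by
    simp [norm_smul, hvpos.ne']
  have : v₀ ⬝ᵥ (A *ᵥ v₀) ≤ (‖v‖⁻¹ • v) ⬝ᵥ (A *ᵥ (‖v‖⁻¹ • v)) := hmin hu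
  simp only [smul_dotProduct, mulVec_smul, dotProduct_smul, smul_eq_mul] at this
  calc v₀ ⬝ᵥ (A *ᵥ v₀) * ‖v‖ ^ 2 ≤ ‖v‖⁻¹ * (‖v‖⁻¹ * v ⬝ᵥ (A *ᵥ v)) * ‖v‖ ^ 2 := by gcongr
    _ = v ⬝ᵥ (A *ᵥ v) := by field_simp

theorem dotProduct_mulVec_integral_gram {μ : Measure (ι → ℝ)} {w : (ι → ℝ) → ℝ}
    (hint : ∀ k l, Integrable (fun x => x k * x l * w x) μ) (v : ι → ℝ) :
    v ⬝ᵥ (of (fun k l => ∫ x, x k * x l * w x ∂μ) *ᵥ v) = ∫ x, w x * (x ⬝ᵥ v) ^ 2 ∂μ := by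
  simp_rw [dotProduct_mulVec_eq_sum, mul_sq_dotProduct_eq_sum, of_apply]
  rw [integral_finsetSum _ fun k _ => integrable_finsetSum _ fun l _ =>
    ((hint k l).const_mul _).mul_const _]
  refine Finset.sum_congr rfl fun k _ => ?_
  rw [integral_finsetSum _ fun l _ => ((hint k l).const_mul _).mul_const _]
  simp_rw [integral_mul_const, integral_const_mul]

theorem posDef_integral_gram [DecidableEq ι] {μ : Measure (ι → ℝ)} {w : (ι → ℝ) → ℝ}
    (hw : ∀ x, 0 ≤ w x) (hint : ∀ k l, Integrable (fun x => x k * x l * w x) μ)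
    (hdet : IsUnit (of fun k l => ∫ x, x k * x l * w x ∂μ).det) :
    (of fun k l => ∫ x, x k * x l * w x ∂μ).PosDef := by
  refine (PosSemidef.posDef_iff_det_ne_zero ?_).2 hdet.ne_zero
  refine PosSemidef.of_dotProduct_mulVec_nonneg ?_ fun v => ?_
  · ext k l
    simp [mul_comm]
  · rw [star_trivial, dotProduct_mulVec_integral_gram hint]
    exact integral_nonneg fun x => mul_nonneg (hw x) (sq_nonneg _)

end QuadraticForm

section Balancing

open Real

variable {ι : Type*} [Fintype ι]

theorem Real.exp_neg_abs_mul_sq_le (b : ℝ) : exp (-|b|) * b ^ 2 ≤ (exp b - 1) * b := by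
  rcases le_total 0 b with hb | hb
  · rw [abs_of_nonneg hb]
    have h1 : exp (-b) * b ≤ b := mul_le_of_le_one_left hb (exp_le_one_iff.2 (by linarith))
    have h2 : b ≤ exp b - 1 := by linarith [add_one_le_exp b]
    nlinarith
  · rw [abs_of_nonpos hb, neg_neg]
    have h : exp b * (1 - b) ≤ 1 := by
      calc exp b * (1 - b) ≤ exp b * exp (-b) := by gcongr; linarith [add_one_le_exp (-b)]
        _ = 1 := by rw [← exp_add, add_neg_cancel, exp_zero]
    nlinarith [mul_nonneg (neg_nonneg.2 hb) (sub_nonneg.2 h)]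

noncomputable def balancingMoment (x : ℕ → ι → ℝ) (n : ℕ) (γ : ι → ℝ) : ι → ℝ :=
  (n : ℝ)⁻¹ • ∑ i ∈ Finset.range n, exp (x i ⬝ᵥ γ) • x i

/-- The Jacobian of `balancingMoment x n` at `γ`. -/
noncomputable def balancingGram (x : ℕ → ι → ℝ) (n : ℕ) (γ : ι → ℝ) : Matrix ι ι ℝ :=
  of fun k l => (n : ℝ)⁻¹ * ∑ i ∈ Finset.range n, x i k * x i l * exp (x i ⬝ᵥ γ)

variable {x : ℕ → ι → ℝ} {n : ℕ}

theorem dotProduct_balancingMoment (γ v : ι → ℝ) :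
    v ⬝ᵥ balancingMoment x n γ = (n : ℝ)⁻¹ * ∑ i ∈ Finset.range n, exp (x i ⬝ᵥ γ) * (x i ⬝ᵥ v) := by
  simp [balancingMoment, dotProduct_comm v, sum_dotProduct]

theorem dotProduct_mulVec_balancingGram (γ v : ι → ℝ) :
    v ⬝ᵥ (balancingGram x n γ *ᵥ v)
      = (n : ℝ)⁻¹ * ∑ i ∈ Finset.range n, exp (x i ⬝ᵥ γ) * (x i ⬝ᵥ v) ^ 2 := by
  simp_rw [dotProduct_mulVec_eq_sum, mul_sq_dotProduct_eq_sum, balancingGram, of_apply,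
    Finset.mul_sum, Finset.sum_mul]
  rw [Finset.sum_comm (s := Finset.range n)]
  refine Finset.sum_congr rfl fun k _ => ?_
  rw [Finset.sum_comm (s := Finset.range n)]
  exact Finset.sum_congr rfl fun l _ => Finset.sum_congr rfl fun i _ => by ring

theorem exp_neg_mul_dotProduct_balancingGram_le {γ₀ γ₁ : ι → ℝ} {β : ℝ}
    (hβ : ∀ i < n, |x i ⬝ᵥ (γ₁ - γ₀)| ≤ β) :
    exp (-β) * ((γ₁ - γ₀) ⬝ᵥ (balancingGram x n γ₀ *ᵥ (γ₁ - γ₀)))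
      ≤ (γ₁ - γ₀) ⬝ᵥ (balancingMoment x n γ₁ - balancingMoment x n γ₀) := by
  rw [dotProduct_mulVec_balancingGram, dotProduct_sub, dotProduct_balancingMoment,
    dotProduct_balancingMoment, ← mul_sub, ← Finset.sum_sub_distrib, mul_left_comm,
    Finset.mul_sum]
  gcongr with i hi
  set b := x i ⬝ᵥ (γ₁ - γ₀)
  have hsplit : x i ⬝ᵥ γ₁ = x i ⬝ᵥ γ₀ + b := by simp only [b, dotProduct_sub]; ring
  rw [hsplit, exp_add]
  calc exp (-β) * (exp (x i ⬝ᵥ γ₀) * b ^ 2)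
      ≤ exp (x i ⬝ᵥ γ₀) * (exp (-|b|) * b ^ 2) := by
        rw [mul_left_comm]
        gcongr
        exact hβ i (Finset.mem_range.1 hi)
    _ ≤ exp (x i ⬝ᵥ γ₀) * ((exp b - 1) * b) :=
        mul_le_mul_of_nonneg_left (exp_neg_abs_mul_sq_le b) (exp_pos _).le
    _ = exp (x i ⬝ᵥ γ₀) * exp b * b - exp (x i ⬝ᵥ γ₀) * b := by ring

theorem norm_sub_le_mul_norm_balancingMoment_sub {γ₀ γ₁ : ι → ℝ} {J : Matrix ι ι ℝ}
    {c δ R : ℝ} (hc : 0 < c) (hJ : ∀ v, c * ‖v‖ ^ 2 ≤ v ⬝ᵥ (J *ᵥ v))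
    (hδ : Fintype.card ι ^ 2 * δ ≤ c / 2) (hG : ∀ k l, |balancingGram x n γ₀ k l - J k l| ≤ δ)
    (hx : ∀ i < n, ‖x i‖ ≤ R) (hγ : ‖γ₁ - γ₀‖ ≤ 1) :
    ‖γ₁ - γ₀‖ ≤ 2 * Fintype.card ι * exp (Fintype.card ι * R) / c
      * ‖balancingMoment x n γ₁ - balancingMoment x n γ₀‖ := by
  set β : ℝ := Fintype.card ι * R
  have hβ : ∀ i < n, |x i ⬝ᵥ (γ₁ - γ₀)| ≤ β := fun i hi => by
    have hR : 0 ≤ R := (norm_nonneg _).trans (hx i hi)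
    calc |x i ⬝ᵥ (γ₁ - γ₀)| ≤ Fintype.card ι * ‖x i‖ * ‖γ₁ - γ₀‖ := abs_dotProduct_le _ _
      _ ≤ Fintype.card ι * R * 1 := by gcongr; exact hx i hi
      _ = β := mul_one _
  set Δ := γ₁ - γ₀
  set D := balancingMoment x n γ₁ - balancingMoment x n γ₀
  have hGram : c / 2 * ‖Δ‖ ^ 2 ≤ Δ ⬝ᵥ (balancingGram x n γ₀ *ᵥ Δ) := by
    have h := abs_dotProduct_mulVec_le (A := balancingGram x n γ₀ - J) (fun k l => hG k l) Δ
    rw [sub_mulVec, dotProduct_sub] at h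
    nlinarith [hJ Δ, (abs_le.1 h).1, mul_le_mul_of_nonneg_right hδ (sq_nonneg ‖Δ‖)]
  have hkey : exp (-β) * (c / 2 * ‖Δ‖ ^ 2) ≤ Fintype.card ι * ‖Δ‖ * ‖D‖ :=
    calc exp (-β) * (c / 2 * ‖Δ‖ ^ 2) ≤ exp (-β) * (Δ ⬝ᵥ (balancingGram x n γ₀ *ᵥ Δ)) := by
          gcongr
      _ ≤ Δ ⬝ᵥ D := exp_neg_mul_dotProduct_balancingGram_le hβ
      _ ≤ Fintype.card ι * ‖Δ‖ * ‖D‖ := (le_abs_self _).trans (abs_dotProduct_le Δ D)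
  rcases (norm_nonneg Δ).eq_or_lt with h0 | h0
  · rw [← h0]; positivity
  rw [Real.exp_neg, inv_mul_le_iff₀ (exp_pos β)] at hkey
  rw [div_mul_eq_mul_div, le_div_iff₀ hc]
  nlinarith

end Balancing

section

variable {Ω : Type*} [MeasurableSpace Ω] {P : Measure Ω}

theorem ae_mem_of_map_eq {E : Type*} [MeasurableSpace E] {μ : Measure E} {K : Set E}
    {X : Ω → E} (hX : AEMeasurable X P) (hlaw : P.map X = μ) (hμK : μ Kᶜ = 0) :
    ∀ᵐ ω ∂P, X ω ∈ K :=
  ae_of_ae_map (p := (· ∈ K)) hX (hlaw ▸ ae_iff.2 hμK)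

theorem tendsto_measureReal_union {l : Filter ℕ} {A B : ℕ → Set Ω}
    (hA : Tendsto (fun n => P.real (A n)) l (𝓝 0)) (hB : Tendsto (fun n => P.real (B n)) l (𝓝 0)) :
    Tendsto (fun n => P.real (A n ∪ B n)) l (𝓝 0) :=
  tendsto_of_tendsto_of_tendsto_of_le_of_le tendsto_const_nhds (by simpa using hA.add hB)
    (fun _ => measureReal_nonneg) (fun _ => measureReal_union_le _ _)

theorem tendsto_measureReal_iUnion {l : Filter ℕ} {ι : Type*} [Fintype ι] {A : ι → ℕ → Set Ω}
    (h : ∀ k, Tendsto (fun n => P.real (A k n)) l (𝓝 0)) :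
    Tendsto (fun n => P.real (⋃ k, A k n)) l (𝓝 0) :=
  tendsto_of_tendsto_of_tendsto_of_le_of_le tendsto_const_nhds
    (by simpa using tendsto_finsetSum Finset.univ fun k _ => h k)
    (fun _ => measureReal_nonneg) (fun _ => measureReal_iUnion_fintype_le _)

theorem boundedInProb_sqrt_smul_sampleMean_sub_balancingMoment [IsProbabilityMeasure P] {d : ℕ}
    {μS μT : Measure (Fin d → ℝ)} {KS KT : Set (Fin d → ℝ)} (hKS : IsCompact KS)
    (hKT : IsCompact KT) (hμSK : μS KSᶜ = 0) (hμTK : μT KTᶜ = 0) {XS XT : ℕ → Ω → Fin d → ℝ}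
    (hXSm : ∀ i, Measurable (XS i)) (hXTm : ∀ j, Measurable (XT j))
    (hXS_law : ∀ i, P.map (XS i) = μS) (hXT_law : ∀ j, P.map (XT j) = μT)
    (hindS : Pairwise fun i j => IndepFun (XS i) (XS j) P)
    (hindT : Pairwise fun i j => IndepFun (XT i) (XT j) P)
    {N : ℕ → ℕ} {C : ℝ} (hN : ∀ n : ℕ, (n : ℝ) ≤ C * N n) {γ : Fin d → ℝ}
    (hpop : ∫ x, Real.exp (x ⬝ᵥ γ) • x ∂μS = ∫ x, x ∂μT) :
    BoundedInProb P (fun (n : ℕ) ω =>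
      √n • ((N n : ℝ)⁻¹ • ∑ j ∈ Finset.range (N n), XT j ω - balancingMoment (XS · ω) n γ)) := by
  have hS := boundedInProb_sqrt_smul_sampleMean_sub hXSm hXS_law hindS hKS hμSK
    (φ := fun x => Real.exp (x ⬝ᵥ γ) • x) (by fun_prop) (N := id) (C := 1) (by simp)
  have hT := boundedInProb_sqrt_smul_sampleMean_sub hXTm hXT_law hindT hKT hμTK
    (φ := fun x => x) continuous_id hN
  rw [hpop] at hS
  have hU := hT.sub hS
  simp only [← smul_sub, sub_sub_sub_cancel_right] at hU
  exact hU

end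

theorem covariate_balancing_root_n_rate_general
    (d : ℕ) (Ω : Type) [MeasurableSpace Ω] (P : Measure Ω) [IsProbabilityMeasure P]
    (μS μT : Measure (Fin d → ℝ)) [IsProbabilityMeasure μS] [IsProbabilityMeasure μT]
    (KS KT : Set (Fin d → ℝ)) (hKS : IsCompact KS) (hKT : IsCompact KT)
    (hμSK : μS KSᶜ = 0) (hμTK : μT KTᶜ = 0)
    (XS XT : ℕ → Ω → (Fin d → ℝ))
    (hXSm : ∀ i, Measurable (XS i)) (hXTm : ∀ j, Measurable (XT j))
    (hXS_law : ∀ i, P.map (XS i) = μS) (hXT_law : ∀ j, P.map (XT j) = μT)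
    -- the two families are i.i.d. and mutually independent
    (hIndep : iIndepFun
      (fun s => Sum.elim XS XT s) P)
    (Nn : ℕ → ℕ)
    (hNbd : ∃ C : ℝ, ∀ n : ℕ, (n : ℝ) ≤ C * (Nn n : ℝ))
    (γbar : Fin d → ℝ)
    (hpop : ∫ x, Real.exp (x ⬝ᵥ γbar) • x ∂μS = ∫ x, x ∂μT)
    (J : Matrix (Fin d) (Fin d) ℝ)
    (hJ : J = Matrix.of (fun i j => ∫ x, x i * x j * Real.exp (x ⬝ᵥ γbar) ∂μS))
    (hJunit : IsUnit J.det)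
    (γhat : ℕ → Ω → (Fin d → ℝ))
    (hee : ∀ n : ℕ, 0 < n → ∀ᵐ ω ∂P,
      (n : ℝ)⁻¹ • ∑ i ∈ Finset.range n, Real.exp ((XS i ω) ⬝ᵥ (γhat n ω)) • XS i ω
        = ((Nn n : ℝ))⁻¹ • ∑ j ∈ Finset.range (Nn n), XT j ω)
    (hconsistent : TendstoInMeasure P γhat atTop (fun _ => γbar)) :
    BoundedInProb P (fun n ω => Real.sqrt n • (γhat n ω - γbar)) := by
  obtain ⟨C, hC⟩ := hNbd
  obtain ⟨R, hR⟩ := hKS.isBounded.exists_norm_le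
  have hgram (k l : Fin d) : Continuous fun x : Fin d → ℝ => x k * x l * Real.exp (x ⬝ᵥ γbar) := by
    fun_prop
  obtain ⟨c, hc, hJc⟩ := (hJ ▸ posDef_integral_gram (fun x => (Real.exp_pos _).le)
    (fun k l => (hgram k l).integrable_of_null_compl_isCompact hKS hμSK) (hJ ▸ hJunit)
    ).exists_pos_mul_sq_norm_le
  have hindS : Pairwise fun i j => IndepFun (XS i) (XS j) P :=
    fun _ _ => (hIndep.precomp Sum.inl_injective).indepFun
  have hindT : Pairwise fun i j => IndepFun (XT i) (XT j) P :=
    fun _ _ => (hIndep.precomp Sum.inr_injective).indepFun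
  set card := Fintype.card (Fin d)
  set δ : ℝ := c / 2 / (card ^ 2 + 1)
  have hcardδ : (card : ℝ) ^ 2 * δ ≤ c / 2 := by
    rw [mul_div_assoc', div_le_iff₀ (by positivity)]
    linarith
  refine (boundedInProb_sqrt_smul_sampleMean_sub_balancingMoment hKS hKT hμSK hμTK hXSm hXTm hXS_law
    hXT_law hindS hindT hC hpop).of_norm_le_mul (c := 2 * card * Real.exp (card * R) / c)
    (by positivity) (A := fun n => {ω | 1 ≤ dist (γhat n ω) γbar} ∪
      ⋃ k, ⋃ l, {ω | δ ≤ dist (balancingGram (XS · ω) n γbar k l) (J k l)}) ?_ ?_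
  · refine tendsto_measureReal_union (tendstoInMeasure_iff_measureReal_dist.1 hconsistent 1 one_pos)
      (tendsto_measureReal_iUnion fun k => tendsto_measureReal_iUnion fun l => ?_)
    rw [hJ]
    exact tendstoInMeasure_iff_measureReal_dist.1
      (tendstoInMeasure_sampleMean hXSm hXS_law hindS hKS hμSK (hgram k l)) δ (by positivity)
  filter_upwards [eventually_gt_atTop 0] with n hn
  filter_upwards [hee n hn, ae_all_iff.2 fun i => ae_mem_of_map_eq (hXSm i).aemeasurable
    (hXS_law i) hμSK] with ω heq hK hA
  simp only [Set.mem_union, Set.mem_iUnion, Set.mem_ofPred_eq, not_or, not_exists, not_le,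
    dist_eq_norm, Real.norm_eq_abs] at hA
  have key := norm_sub_le_mul_norm_balancingMoment_sub hc hJc hcardδ (fun k l => (hA.2 k l).le)
    (fun i _ => hR _ (hK i)) hA.1.le
  rw [show balancingMoment (XS · ω) n (γhat n ω) = _ from heq] at key
  rw [norm_smul, norm_smul, mul_left_comm]
  exact mul_le_mul_of_nonneg_left key (norm_nonneg _)

/-- **Lemma B3 (propensity-score half): `√n`-rate of the covariate-balancing estimator.**
Let `(X_i^S) ~ μS` and `(X_i^T) ~ μT` be mutually independent i.i.d. families with compact
supports, `n/N_n` bounded, `γ̄` the population solution of `E_S[X exp(Xᵀγ̄)] = E_T[X]` with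
`J = E_S[XXᵀ exp(Xᵀγ̄)]` invertible.  If `γ̂_n` solves the empirical covariate-balancing
equation a.s. and is consistent for `γ̄`, then `γ̂_n − γ̄ = O_p(n^{−1/2})`. -/
theorem covariate_balancing_root_n_rate
    (d : ℕ) (Ω : Type) [MeasurableSpace Ω] (P : Measure Ω) [IsProbabilityMeasure P]
    (μS μT : Measure (Fin d → ℝ)) [IsProbabilityMeasure μS] [IsProbabilityMeasure μT]
    (KS KT : Set (Fin d → ℝ)) (hKS : IsCompact KS) (hKT : IsCompact KT)
    (hμSK : μS KSᶜ = 0) (hμTK : μT KTᶜ = 0)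
    (XS XT : ℕ → Ω → (Fin d → ℝ))
    (hXSm : ∀ i, Measurable (XS i)) (hXTm : ∀ j, Measurable (XT j))
    (hXS_law : ∀ i, P.map (XS i) = μS) (hXT_law : ∀ j, P.map (XT j) = μT)
    -- the two families are i.i.d. and mutually independent
    (hIndep : iIndepFun
      (fun s => Sum.elim XS XT s) P)
    (Nn : ℕ → ℕ) (hNpos : ∀ n, 0 < Nn n)
    (hNbd : ∃ C : ℝ, ∀ n : ℕ, (n : ℝ) ≤ C * (Nn n : ℝ))
    (γbar : Fin d → ℝ)
    (hpop : ∫ x, Real.exp (x ⬝ᵥ γbar) • x ∂μS = ∫ x, x ∂μT)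
    (J : Matrix (Fin d) (Fin d) ℝ)
    (hJ : J = Matrix.of (fun i j => ∫ x, x i * x j * Real.exp (x ⬝ᵥ γbar) ∂μS))
    (hJunit : IsUnit J.det)
    (γhat : ℕ → Ω → (Fin d → ℝ)) (hγm : ∀ n, Measurable (γhat n))
    (hee : ∀ n : ℕ, 0 < n → ∀ᵐ ω ∂P,
      (n : ℝ)⁻¹ • ∑ i ∈ Finset.range n, Real.exp ((XS i ω) ⬝ᵥ (γhat n ω)) • XS i ω
        = ((Nn n : ℝ))⁻¹ • ∑ j ∈ Finset.range (Nn n), XT j ω)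
    (hconsistent : TendstoInMeasure P γhat atTop (fun _ => γbar)) :
    BoundedInProb P (fun n ω => Real.sqrt n • (γhat n ω - γbar)) :=
  covariate_balancing_root_n_rate_general d Ω P μS μT KS KT hKS hKT hμSK hμTK XS XT hXSm hXTm
    hXS_law hXT_law hIndep Nn hNbd γbar hpop J hJ hJunit γhat hee hconsistent
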